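/- For all integers n ≥ 2 and p > q ≥ 1 with p ≡ q (mod 2), the fractal cube FC⁽ⁿ⁾(p,q) ⊆ ℝⁿ is a connected set. (In particular the fractal geometry supports connected macroscopic logical strings.) -/

import Mathlib

open Set

/-- The digit set `D` of the fractal cube construction: tuples `a ∈ {0,…,p−1}ⁿ` that do
not lie in the central block `{m,…,m+q−1}ⁿ`, where `m = (p−q)/2`. -/
def digitSet (n p q : ℕ) : Set (Fin n → ℕ) :=
  {a | (∀ i, a i < p) ∧ ¬ ∀ i, (p - q) / 2 ≤ a i ∧ a i ≤ (p - q) / 2 + q - 1}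

/-- The contracting similarity `x ↦ (x + a) / p` of `ℝⁿ`. -/
noncomputable def simMap (n p : ℕ) (a : Fin n → ℕ) (x : EuclideanSpace ℝ (Fin n)) :
    EuclideanSpace ℝ (Fin n) :=
  WithLp.toLp 2 (fun i => (x i + a i) / p)

/-- The level-`l` regions `Ωₗ` of the fractal cube construction:
`Ω₀ = [0,1]ⁿ` and `Ω_{l+1} = ⋃_{a ∈ D} p⁻¹ · (a + Ωₗ)`. -/
noncomputable def levelRegion (n p q : ℕ) : ℕ → Set (EuclideanSpace ℝ (Fin n))
  | 0 => {x | ∀ i, x i ∈ Icc (0 : ℝ) 1}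
  | l + 1 => ⋃ a ∈ digitSet n p q, simMap n p a '' levelRegion n p q l

/-- The fractal cube `FC⁽ⁿ⁾(p,q) = ⋂_l Ωₗ`. -/
noncomputable def fractalCube (n p q : ℕ) : Set (EuclideanSpace ℝ (Fin n)) :=
  ⋂ l, levelRegion n p q l

/-!
The level regions `Ωₗ` form a decreasing sequence of compact sets, and a decreasing intersection of
compact connected sets is connected; so it suffices that every `Ωₗ` is connected. Parity forces
`p − q ≥ 2`, so the digits `0` and `p − 1` lie outside the central block and the corners `0` and
`eᵢ` of the cube are fixed points of the maps `simMap`; hence they lie in every `Ωₗ`. Thus the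
pieces of `Ω_{l+1}` with digits `a` and `a − eᵢ` meet at `a / p`. For `n ≥ 2` every digit can be
lowered one unit at a time down to `0` without entering the central block, which links every piece
to the piece of the digit `0`.
-/

open Topology Relation

theorem IsConnected.iInter_of_directed {X ι : Type*} [TopologicalSpace X] [T2Space X]
    [Nonempty ι] {K : ι → Set X} (hdir : Directed (· ⊇ ·) K) (hK : ∀ i, IsCompact (K i))
    (hconn : ∀ i, IsConnected (K i)) : IsConnected (⋂ i, K i) := by
  have hclosed : IsClosed (⋂ i, K i) := isClosed_iInter fun i => (hK i).isClosed
  have hcpt : IsCompact (⋂ i, K i) :=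
    (hK (Classical.arbitrary ι)).of_isClosed_subset hclosed (iInter_subset _ _)
  refine ⟨IsCompact.nonempty_iInter_of_directed_nonempty_isCompact_isClosed K hdir
    (fun i => (hconn i).nonempty) hK fun i => (hK i).isClosed, ?_⟩
  rw [isPreconnected_iff_subset_of_fully_disjoint_closed hclosed]
  intro A B hA hB hAB hdisj
  obtain ⟨U, V, hU, hV, hAU, hBV, hUV⟩ := SeparatedNhds.of_isCompact_isCompact
    (hcpt.inter_right hA) (hcpt.inter_right hB) (hdisj.mono inf_le_right inf_le_right)
  have hUV_nhds : ∀ x ∈ ⋂ i, K i, U ∪ V ∈ 𝓝 x := fun x hx =>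
    (hU.union hV).mem_nhds ((hAB hx).imp (fun h => hAU ⟨hx, h⟩) fun h => hBV ⟨hx, h⟩)
  obtain ⟨i, hi⟩ := exists_subset_nhds_of_isCompact hdir hK hUV_nhds
  rcases (hconn i).isPreconnected.subset_or_subset hU hV hUV hi with hiU | hiV
  · refine .inl fun x hx => (hAB hx).resolve_right fun hxB => hUV.le_bot ⟨?_, hBV ⟨hx, hxB⟩⟩
    exact hiU (mem_iInter.1 hx i)
  · refine .inr fun x hx => (hAB hx).resolve_left fun hxA => hUV.le_bot ⟨hAU ⟨hx, hxA⟩, ?_⟩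
    exact hiV (mem_iInter.1 hx i)

section

variable {n p q : ℕ}

lemma mem_digitSet {a : Fin n → ℕ} : a ∈ digitSet n p q ↔
    (∀ i, a i < p) ∧ ∃ i, a i < (p - q) / 2 ∨ (p - q) / 2 + q - 1 < a i := by
  simp only [digitSet, mem_ofPred_eq, not_forall, not_and_or, not_le]

lemma digitSet_finite : (digitSet n p q).Finite :=
  (Set.Finite.pi' fun _ => Set.finite_Iio p).subset fun _ ha => (mem_digitSet.1 ha).1

lemma zero_mem_digitSet (hn : 0 < n) (hqp : q + 2 ≤ p) : (0 : Fin n → ℕ) ∈ digitSet n p q :=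
  mem_digitSet.2
    ⟨fun _ => by rw [Pi.zero_apply]; omega, ⟨0, hn⟩, .inl (by rw [Pi.zero_apply]; omega)⟩

lemma single_pred_mem_digitSet (hqp : q + 2 ≤ p) (j : Fin n) :
    Pi.single j (p - 1) ∈ digitSet n p q := by
  refine mem_digitSet.2 ⟨fun i => ?_, j, .inr (by rw [Pi.single_eq_same]; omega)⟩
  rcases eq_or_ne i j with rfl | hij
  · rw [Pi.single_eq_same]; omega
  · rw [Pi.single_eq_of_ne hij]; omega

lemma exists_update_pred_mem_digitSet (hn : 2 ≤ n) (hqp : q + 2 ≤ p) {a : Fin n → ℕ}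
    (ha : a ∈ digitSet n p q) (ha0 : a ≠ 0) :
    ∃ i, a i ≠ 0 ∧ Function.update a i (a i - 1) ∈ digitSet n p q := by
  obtain ⟨hlt, j, hj⟩ := mem_digitSet.1 ha
  have hlt' : ∀ i, ∀ k, Function.update a i (a i - 1) k < p := fun i k => by
    rcases eq_or_ne k i with rfl | hki
    · rw [Function.update_self]; exact (Nat.sub_le _ _).trans_lt (hlt k)
    · rw [Function.update_of_ne hki]; exact hlt k
  -- Lower a coordinate other than the witness `j`; if there is none, lower `a j`, and then any
  -- other coordinate is `0 < (p - q) / 2` and becomes the witness.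
  by_cases hother : ∃ i ≠ j, a i ≠ 0
  · obtain ⟨i, hij, hi⟩ := hother
    exact ⟨i, hi, mem_digitSet.2 ⟨hlt' i, j, by simpa [Ne.symm hij] using hj⟩⟩
  · push Not at hother
    have haj : a j ≠ 0 := fun haj => ha0 <| funext fun i => by
      rcases eq_or_ne i j with rfl | hij
      exacts [haj, hother i hij]
    have : Nontrivial (Fin n) := Fin.nontrivial_iff_two_le.2 hn
    obtain ⟨k, hkj⟩ := exists_ne j
    refine ⟨j, haj, mem_digitSet.2 ⟨hlt' j, k, .inl ?_⟩⟩
    rw [Function.update_of_ne hkj, hother k hkj]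
    omega

lemma simMap_continuous (a : Fin n → ℕ) : Continuous (simMap n p a) := by
  unfold simMap; fun_prop

lemma levelRegion_zero : levelRegion n p q 0 = PiLp.homeomorph 2 _ ⁻¹' Icc 0 1 := by
  ext x
  simp only [levelRegion, mem_Icc, forall_and, mem_ofPred_eq, mem_preimage, Pi.le_def,
    Pi.zero_apply, Pi.one_apply]
  rfl

lemma simMap_mem_levelRegion_zero {a : Fin n → ℕ} (ha : ∀ i, a i < p)
    {x : EuclideanSpace ℝ (Fin n)} (hx : x ∈ levelRegion n p q 0) :
    simMap n p a x ∈ levelRegion n p q 0 := fun i => by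
  have hp : (0 : ℝ) < p := by exact_mod_cast (ha i).pos
  have hai : (a i : ℝ) + 1 ≤ p := by exact_mod_cast ha i
  obtain ⟨hx0, hx1⟩ := hx i
  exact ⟨by simp only [simMap]; positivity, by
    simp only [simMap]; rw [div_le_one hp]; linarith⟩

lemma levelRegion_succ_subset : ∀ l, levelRegion n p q (l + 1) ⊆ levelRegion n p q l
  | 0 => iUnion₂_subset fun _ ha => image_subset_iff.2 fun _ hx =>
      simMap_mem_levelRegion_zero (mem_digitSet.1 ha).1 hx
  | l + 1 => iUnion₂_mono fun _ _ => image_mono (levelRegion_succ_subset l)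

lemma levelRegion_antitone : Antitone (levelRegion n p q) :=
  antitone_nat_of_succ_le levelRegion_succ_subset

lemma levelRegion_isCompact : ∀ l, IsCompact (levelRegion n p q l)
  | 0 => by rw [levelRegion_zero, Homeomorph.isCompact_preimage]; exact isCompact_Icc
  | l + 1 => digitSet_finite.isCompact_biUnion fun a _ =>
      (levelRegion_isCompact l).image (simMap_continuous a)

lemma mem_levelRegion_of_simMap_eq_self {a : Fin n → ℕ} (ha : a ∈ digitSet n p q)
    {x : EuclideanSpace ℝ (Fin n)} (hx : x ∈ levelRegion n p q 0) (hfix : simMap n p a x = x) :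
    ∀ l, x ∈ levelRegion n p q l
  | 0 => hx
  | l + 1 => mem_biUnion ha ⟨x, mem_levelRegion_of_simMap_eq_self ha hx hfix l, hfix⟩

lemma simMap_zero_zero : simMap n p 0 0 = 0 := by
  ext i; simp [simMap]

lemma simMap_single (hp : 0 < p) (j : Fin n) :
    simMap n p (Pi.single j (p - 1)) (EuclideanSpace.single j 1) = EuclideanSpace.single j 1 := by
  ext i
  rcases eq_or_ne i j with rfl | hij
  · simp [simMap, Nat.cast_sub hp, hp.ne']
  · simp [simMap, hij]

lemma simMap_update_pred_single {a : Fin n → ℕ} {i : Fin n} (hai : a i ≠ 0) :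
    simMap n p (Function.update a i (a i - 1)) (EuclideanSpace.single i 1) = simMap n p a 0 := by
  ext k
  rcases eq_or_ne k i with rfl | hki
  · simp [simMap, Nat.cast_sub (Nat.one_le_iff_ne_zero.2 hai)]
  · simp [simMap, hki]

lemma zero_mem_levelRegion (hn : 0 < n) (hqp : q + 2 ≤ p) (l : ℕ) :
    (0 : EuclideanSpace ℝ (Fin n)) ∈ levelRegion n p q l :=
  mem_levelRegion_of_simMap_eq_self (zero_mem_digitSet hn hqp) (fun _ => by simp)
    simMap_zero_zero l

lemma single_mem_levelRegion (hqp : q + 2 ≤ p) (j : Fin n) (l : ℕ) :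
    EuclideanSpace.single j (1 : ℝ) ∈ levelRegion n p q l :=
  mem_levelRegion_of_simMap_eq_self (single_pred_mem_digitSet hqp j)
    (fun i => by rw [PiLp.single_apply]; split_ifs <;> simp)
    (simMap_single (by omega) j) l

lemma simMap_image_inter_update_pred_nonempty (hqp : q + 2 ≤ p) {a : Fin n → ℕ} {i : Fin n}
    (hai : a i ≠ 0) (l : ℕ) :
    (simMap n p a '' levelRegion n p q l ∩
      simMap n p (Function.update a i (a i - 1)) '' levelRegion n p q l).Nonempty :=
  ⟨simMap n p a 0, mem_image_of_mem _ (zero_mem_levelRegion i.pos hqp l),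
    simMap_update_pred_single hai ▸ mem_image_of_mem _ (single_mem_levelRegion hqp i l)⟩

lemma levelRegion_isConnected (hn : 2 ≤ n) (hqp : q + 2 ≤ p) :
    ∀ l, IsConnected (levelRegion n p q l)
  | 0 => by
    rw [levelRegion_zero, Homeomorph.isConnected_preimage]
    exact (convex_Icc 0 1).isConnected (nonempty_Icc.2 zero_le_one)
  | l + 1 => by
    let Meets a b := a ∈ digitSet n p q ∧ b ∈ digitSet n p q ∧
      (simMap n p a '' levelRegion n p q l ∩ simMap n p b '' levelRegion n p q l).Nonempty
    have : Std.Symm Meets := ⟨fun _ _ ⟨ha, hb, h⟩ => ⟨hb, ha, inter_comm .. ▸ h⟩⟩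
    have meets_zero : ∀ a ∈ digitSet n p q, ReflTransGen Meets a 0 := by
      intro a
      induction a using WellFoundedLT.induction with
      | ind a ih =>
        intro ha
        rcases eq_or_ne a 0 with rfl | ha0
        · rfl
        obtain ⟨i, hai, hmem⟩ := exists_update_pred_mem_digitSet hn hqp ha ha0
        exact .head ⟨ha, hmem, simMap_image_inter_update_pred_nonempty hqp hai l⟩
          (ih _ (update_lt_self_iff.2 (by omega)) hmem)
    refine IsConnected.biUnion_of_reflTransGen ⟨0, zero_mem_digitSet (by omega) hqp⟩
      (fun a _ => (levelRegion_isConnected hn hqp l).image _ (simMap_continuous a).continuousOn)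
      fun a ha b hb => ?_
    exact ReflTransGen.mono (fun _ _ h => ⟨h.2.2, h.1⟩) _ _
      ((meets_zero a ha).trans (Std.Symm.symm _ _ (meets_zero b hb)))

end

theorem fractalCube_isConnected_general (n p q : ℕ) (hn : 2 ≤ n) (hpq : q < p)
    (hmod : p % 2 = q % 2) :
    IsConnected (fractalCube n p q) :=
  IsConnected.iInter_of_directed levelRegion_antitone.directed_ge levelRegion_isCompact
    (levelRegion_isConnected hn (by omega))

/-- For all integers `n ≥ 2` and `p > q ≥ 1` with `p ≡ q (mod 2)`,
the fractal cube `FC⁽ⁿ⁾(p,q) ⊆ ℝⁿ` is a connected set. -/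
theorem fractalCube_isConnected (n p q : ℕ) (hn : 2 ≤ n) (hq : 1 ≤ q) (hpq : q < p)
    (hmod : p % 2 = q % 2) :
    IsConnected (fractalCube n p q) :=
  fractalCube_isConnected_general n p q hn hpq hmod
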